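/- arXiv:0810.3218 — 7 statements merged into one kernel-verified Lean document; each statement's English description precedes it below -/
import Mathlib

section
/- Let n, m ≥ 1 be integers and let J : ℝ^m → End(ℝ^{2n}) be a linear map such that each J_z is skew-symmetric and J_z ∘ J_z = −|z|²·I. Define the bilinear skew-symmetric map [·,·] : ℝ^{2n} × ℝ^{2n} → ℝ^m by ⟨z, [x,y]⟩ = ⟨J_z x, y⟩ for all z ∈ ℝ^m. Fix η₀ ∈ ℝ^m with η₀ ≠ 0 and ξ₀ ∈ ℝ^{2n}, and define the curves x(t) = |η₀|^{−2} J_{η₀}((I − exp(t J_{η₀}))ξ₀), z(t) = (|ξ₀|²/(2|η₀|³))·(|η₀|t − sin(|η₀|t))·η₀, ξ(t) = (1/2) J_{η₀} x(t) + ξ₀, and η(t) = η₀. Then x(0) = 0, z(0) = 0, and for every t ∈ ℝ these curves satisfy Hamilton's equations of motion for the subriemannian Hamiltonian: x'(t) = ξ(t) + (1/2) J_{η(t)} x(t); z'(t) = (1/4)|x(t)|² η(t) + (1/2)[x(t), ξ(t)]; ξ'(t) = −(1/4)|η(t)|² x(t) + (1/2) J_{η(t)} ξ(t); η'(t) = 0.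 -/
open scoped RealInnerProductSpace

/-!
Since `J η₀ ∘ J η₀ = -‖η₀‖²`, the exponential has the closed form
`exp (t • J η₀) = cos (‖η₀‖ t) + (sin (‖η₀‖ t) / ‖η₀‖) J η₀`, so `x t` and `ξ t` move in the plane
spanned by `ξ₀` and `J η₀ ξ₀`. There the Clifford relations make inner products, norms and
brackets explicit (`⟪J w v, J η v⟫ = ⟪w, η⟫ ‖v‖²`), and Hamilton's equations become trigonometric
identities; in particular `[x t, ξ t] = 0`, its coefficient being `(sin² + cos² - 1) / (2 ‖η₀‖²)`.
-/

section ExpOfSquareRootOfMinusScalar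

variable {𝔸 : Type*} [NormedRing 𝔸] [NormedAlgebra ℝ 𝔸] {A : 𝔸} {r : ℝ}

theorem cos_sub_sin_mul_cos_add_sin (hA : A * A = (-(r ^ 2)) • 1) (hr : r ≠ 0) (θ : ℝ) :
    (Real.cos θ • 1 - (Real.sin θ / r) • A) * (Real.cos θ • 1 + (Real.sin θ / r) • A) = 1 := by
  simp only [sub_mul, mul_add, smul_mul_assoc, mul_smul_comm, one_mul, mul_one, hA, smul_smul]
  match_scalars <;> field_simp
  · exact Real.cos_sq_add_sin_sq θ
  · ring

variable [CompleteSpace 𝔸]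

theorem exp_smul_mul_cos_sub_sin (hA : A * A = (-(r ^ 2)) • 1) (hr : r ≠ 0) (t : ℝ) :
    NormedSpace.exp (t • A) * (Real.cos (r * t) • 1 - (Real.sin (r * t) / r) • A) = 1 := by
  -- `P s` is the closed form of `exp (-s • A)`, so `exp (s • A) * P s` has derivative zero.
  set P : ℝ → 𝔸 := fun s => Real.cos (r * s) • 1 - (Real.sin (r * s) / r) • A
  have hP : ∀ s, HasDerivAt P (-(r * Real.sin (r * s)) • 1 - Real.cos (r * s) • A) s := by
    intro s
    have hrs : HasDerivAt (r * ·) r s := by simpa using (hasDerivAt_id s).const_mul r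
    refine ((hrs.cos.smul_const (1 : 𝔸)).sub ((hrs.sin.div_const r).smul_const A)).congr_deriv ?_
    match_scalars <;> field_simp
  have hderiv : ∀ s, HasDerivAt (fun u => NormedSpace.exp (u • A) * P u) 0 s := by
    intro s
    refine ((hasDerivAt_exp_smul_const A s).mul (hP s)).congr_deriv ?_
    simp only [P, mul_assoc, mul_sub, mul_smul_comm, mul_one, hA, smul_smul]
    match_scalars <;> field_simp <;> ring
  have hconst := is_const_of_deriv_eq_zero (fun u => (hderiv u).differentiableAt)
    (fun u => (hderiv u).deriv) t 0
  simpa [P] using hconst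

theorem exp_smul_eq_cos_add_sin (hA : A * A = (-(r ^ 2)) • 1) (hr : r ≠ 0) (t : ℝ) :
    NormedSpace.exp (t • A) = Real.cos (r * t) • 1 + (Real.sin (r * t) / r) • A := by
  calc NormedSpace.exp (t • A)
      = NormedSpace.exp (t • A) * (Real.cos (r * t) • 1 - (Real.sin (r * t) / r) • A) *
          (Real.cos (r * t) • 1 + (Real.sin (r * t) / r) • A) := by
        rw [mul_assoc, cos_sub_sin_mul_cos_add_sin hA hr, mul_one]
    _ = _ := by rw [exp_smul_mul_cos_sub_sin hA hr, one_mul]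

end ExpOfSquareRootOfMinusScalar

section CliffordModule

variable {E F : Type*} [NormedAddCommGroup E] [InnerProductSpace ℝ E]
  [NormedAddCommGroup F] [InnerProductSpace ℝ F]

theorem inner_apply_self_eq_zero_of_skew {T : E →L[ℝ] E} (hT : ∀ x y, ⟪T x, y⟫ = -⟪x, T y⟫)
    (v : E) : ⟪T v, v⟫ = 0 := by
  linarith [hT v v, real_inner_comm (T v) v]

variable {J : F →ₗ[ℝ] E →L[ℝ] E}

theorem inner_apply_apply_eq (hskew : ∀ z x y, ⟪J z x, y⟫ = -⟪x, J z y⟫)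
    (hsq : ∀ z x, J z (J z x) = -(‖z‖ ^ 2) • x) (w η : F) (v : E) :
    ⟪J w v, J η v⟫ = ⟪w, η⟫ * ‖v‖ ^ 2 := by
  have hdiag : ∀ z, ⟪J z v, J z v⟫ = ‖z‖ ^ 2 * ‖v‖ ^ 2 := fun z => by
    rw [hskew, hsq, inner_smul_right, real_inner_self_eq_norm_sq]; ring
  have hsum := hdiag (w + η)
  simp only [map_add, add_apply, real_inner_add_add_self, norm_add_sq_real, hdiag] at hsum
  linarith [real_inner_comm (J w v) (J η v)]

theorem inner_apply_smul_add_smul_apply (hskew : ∀ z x y, ⟪J z x, y⟫ = -⟪x, J z y⟫)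
    (hsq : ∀ z x, J z (J z x) = -(‖z‖ ^ 2) • x) (w η : F) (v : E) (a b c d : ℝ) :
    ⟪J w (a • v + b • J η v), c • v + d • J η v⟫ = (a * d - b * c) * ⟪w, η⟫ * ‖v‖ ^ 2 := by
  have hswap : ⟪J w (J η v), v⟫ = -(⟪w, η⟫ * ‖v‖ ^ 2) := by
    rw [hskew, real_inner_comm, inner_apply_apply_eq hskew hsq]
  simp only [map_add, map_smul, inner_add_left, inner_add_right, real_inner_smul_left,
    real_inner_smul_right, inner_apply_self_eq_zero_of_skew (hskew w), hswap,
    inner_apply_apply_eq hskew hsq]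
  ring

theorem norm_smul_add_smul_apply_sq (hskew : ∀ z x y, ⟪J z x, y⟫ = -⟪x, J z y⟫)
    (hsq : ∀ z x, J z (J z x) = -(‖z‖ ^ 2) • x) (η : F) (v : E) (a b : ℝ) :
    ‖a • v + b • J η v‖ ^ 2 = (a ^ 2 + b ^ 2 * ‖η‖ ^ 2) * ‖v‖ ^ 2 := by
  have hJ : ‖J η v‖ ^ 2 = ‖η‖ ^ 2 * ‖v‖ ^ 2 := by
    simpa only [real_inner_self_eq_norm_sq] using inner_apply_apply_eq hskew hsq η η v
  rw [norm_add_sq_real, norm_smul, norm_smul, mul_pow, mul_pow, hJ, real_inner_smul_left,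
    real_inner_smul_right, real_inner_comm, inner_apply_self_eq_zero_of_skew (hskew η),
    Real.norm_eq_abs, Real.norm_eq_abs, sq_abs, sq_abs]
  ring

theorem bracket_smul_add_smul_apply (hskew : ∀ z x y, ⟪J z x, y⟫ = -⟪x, J z y⟫)
    (hsq : ∀ z x, J z (J z x) = -(‖z‖ ^ 2) • x) {br : E → E → F}
    (hbr : ∀ z x y, ⟪z, br x y⟫ = ⟪J z x, y⟫) (η : F) (v : E) (a b c d : ℝ) :
    br (a • v + b • J η v) (c • v + d • J η v) = ((a * d - b * c) * ‖v‖ ^ 2) • η := by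
  refine ext_inner_left ℝ fun w => ?_
  rw [hbr, inner_apply_smul_add_smul_apply hskew hsq, real_inner_smul_right]
  ring

end CliffordModule

theorem smul_apply_one_sub_exp_smul_apply {E : Type*} [NormedAddCommGroup E] [NormedSpace ℝ E]
    [CompleteSpace E] {A : E →L[ℝ] E} {r : ℝ} (hA : A * A = (-(r ^ 2)) • 1) (hr : r ≠ 0)
    (t : ℝ) (v : E) :
    (r ^ 2)⁻¹ • A ((1 - NormedSpace.exp (t • A)) v) =
      (Real.sin (r * t) / r) • v + ((1 - Real.cos (r * t)) / r ^ 2) • A v := by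
  have hAA : A (A v) = -(r ^ 2) • v := by
    simpa using congr($hA v)
  rw [exp_smul_eq_cos_add_sin hA hr]
  simp only [sub_apply, add_apply, smul_apply, one_apply_eq_self, map_sub, map_add, map_smul, hAA]
  match_scalars <;> field_simp

theorem hasDerivAt_of_eq_sin_smul_add_one_sub_cos_smul {E : Type*} [NormedAddCommGroup E]
    [NormedSpace ℝ E] {A : E →L[ℝ] E} {r : ℝ} (hAA : ∀ v, A (A v) = -(r ^ 2) • v) (hr : r ≠ 0)
    (v : E) {X Ξ : ℝ → E}
    (hX : ∀ s, X s = (Real.sin (r * s) / r) • v + ((1 - Real.cos (r * s)) / r ^ 2) • A v)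
    (hΞ : ∀ s, Ξ s = (1 / 2 : ℝ) • A (X s) + v) (t : ℝ) :
    HasDerivAt X (Ξ t + (1 / 2 : ℝ) • A (X t)) t ∧
      HasDerivAt Ξ ((-(1 / 4) * r ^ 2) • X t + (1 / 2 : ℝ) • A (Ξ t)) t := by
  have hlin : HasDerivAt (r * ·) r t := by simpa using (hasDerivAt_id t).const_mul r
  have hdX : HasDerivAt X (Real.cos (r * t) • v + (Real.sin (r * t) / r) • A v) t := by
    rw [funext hX]
    refine ((hlin.sin.div_const r).smul_const v).add
      (((hlin.cos.const_sub 1).div_const _).smul_const _) |>.congr_deriv ?_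
    match_scalars <;> field_simp
  refine ⟨?_, ?_⟩
  · refine hdX.congr_deriv ?_
    rw [hΞ, hX]
    simp only [map_add, map_smul, hAA]
    match_scalars <;> field_simp <;> ring
  · rw [hΞ, funext hΞ]
    refine ((A.hasFDerivAt.comp_hasDerivAt t hdX).const_smul (1 / 2 : ℝ)).add_const v
      |>.congr_deriv ?_
    rw [hX]
    simp only [map_add, map_smul, hAA]
    match_scalars <;> field_simp <;> ring

theorem hamilton_solution_general (n m : ℕ)
    (J : EuclideanSpace ℝ (Fin m) →ₗ[ℝ]
      (EuclideanSpace ℝ (Fin (2 * n)) →L[ℝ] EuclideanSpace ℝ (Fin (2 * n))))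
    (hJ_skew : ∀ (z : EuclideanSpace ℝ (Fin m)) (x y : EuclideanSpace ℝ (Fin (2 * n))),
      ⟪J z x, y⟫ = -⟪x, J z y⟫)
    (hJ_sq : ∀ (z : EuclideanSpace ℝ (Fin m)) (x : EuclideanSpace ℝ (Fin (2 * n))),
      J z (J z x) = -(‖z‖ ^ 2) • x)
    (br : EuclideanSpace ℝ (Fin (2 * n)) → EuclideanSpace ℝ (Fin (2 * n)) →
      EuclideanSpace ℝ (Fin m))
    (hbr : ∀ (z : EuclideanSpace ℝ (Fin m)) (x y : EuclideanSpace ℝ (Fin (2 * n))),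
      ⟪z, br x y⟫ = ⟪J z x, y⟫)
    (η₀ : EuclideanSpace ℝ (Fin m)) (hη₀ : η₀ ≠ 0)
    (ξ₀ : EuclideanSpace ℝ (Fin (2 * n)))
    (x : ℝ → EuclideanSpace ℝ (Fin (2 * n))) (z : ℝ → EuclideanSpace ℝ (Fin m))
    (ξ : ℝ → EuclideanSpace ℝ (Fin (2 * n))) (η : ℝ → EuclideanSpace ℝ (Fin m))
    (hx : ∀ t, x t = (‖η₀‖ ^ 2)⁻¹ •
      (J η₀) (((1 : EuclideanSpace ℝ (Fin (2 * n)) →L[ℝ] EuclideanSpace ℝ (Fin (2 * n))) -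
        NormedSpace.exp (t • J η₀)) ξ₀))
    (hz : ∀ t, z t = (‖ξ₀‖ ^ 2 / (2 * ‖η₀‖ ^ 3) * (‖η₀‖ * t - Real.sin (‖η₀‖ * t))) • η₀)
    (hξ : ∀ t, ξ t = (1 / 2 : ℝ) • (J η₀) (x t) + ξ₀)
    (hη : ∀ t, η t = η₀) :
    x 0 = 0 ∧ z 0 = 0 ∧
    ∀ t : ℝ,
      HasDerivAt x (ξ t + (1 / 2 : ℝ) • (J (η t)) (x t)) t ∧
      HasDerivAt z ((1 / 4 * ‖x t‖ ^ 2) • η t + (1 / 2 : ℝ) • br (x t) (ξ t)) t ∧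
      HasDerivAt ξ ((-(1 / 4) * ‖η t‖ ^ 2) • x t + (1 / 2 : ℝ) • (J (η t)) (ξ t)) t ∧
      HasDerivAt η 0 t := by
  set r := ‖η₀‖ with hr_def
  have hr : r ≠ 0 := norm_ne_zero_iff.mpr hη₀
  have hA : J η₀ * J η₀ = (-(r ^ 2)) • 1 := by
    ext1 v
    simp [hJ_sq, r]
  have hxc : ∀ t,
      x t = (Real.sin (r * t) / r) • ξ₀ + ((1 - Real.cos (r * t)) / r ^ 2) • J η₀ ξ₀ :=
    fun t => by rw [hx]; exact smul_apply_one_sub_exp_smul_apply hA hr t ξ₀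
  have hξc : ∀ t,
      ξ t = ((1 + Real.cos (r * t)) / 2) • ξ₀ + (Real.sin (r * t) / (2 * r)) • J η₀ ξ₀ :=
    fun t => by
      rw [hξ, hxc]
      simp only [map_add, map_smul, hJ_sq]
      match_scalars <;> field_simp
      ring
  have hxξ := hasDerivAt_of_eq_sin_smul_add_one_sub_cos_smul (hJ_sq η₀) hr ξ₀ hxc hξ
  refine ⟨by simp [hxc], by simp [hz], fun t => ⟨?_, ?_, ?_, ?_⟩⟩
  · rw [hη]
    exact (hxξ t).1
  · have hlin : HasDerivAt (r * ·) r t := by simpa using (hasDerivAt_id t).const_mul r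
    rw [hη, hxc, hξc, bracket_smul_add_smul_apply hJ_skew hJ_sq hbr,
      norm_smul_add_smul_apply_sq hJ_skew hJ_sq, funext hz]
    refine ((hlin.sub hlin.sin).const_mul _ |>.smul_const η₀).congr_deriv ?_
    match_scalars
    simp only [← hr_def]
    field_simp
    linear_combination (-8 * ‖ξ₀‖ ^ 2) * Real.sin_sq_add_cos_sq (r * t)
  · rw [hη]
    exact (hxξ t).2
  · rw [funext hη]
    exact hasDerivAt_const t η₀

/-- The explicit curves solve Hamilton's equations of motion on an H-type group.
`J : ℝ^m →ₗ End(ℝ^{2n})` is linear with each `J z` skew-symmetric and `J z ∘ J z = −|z|²I`;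
the bracket `br : ℝ^{2n} × ℝ^{2n} → ℝ^m` is defined by ⟨z, [x,y]⟩ = ⟨J z x, y⟩.
Given η₀ ≠ 0 and ξ₀, the curves
x(t) = |η₀|^{−2} J_{η₀}((I − exp(t J_{η₀}))ξ₀),
z(t) = (|ξ₀|²/(2|η₀|³))(|η₀|t − sin(|η₀|t))η₀,
ξ(t) = (1/2) J_{η₀} x(t) + ξ₀, η(t) = η₀
satisfy x(0) = 0, z(0) = 0 and Hamilton's equations
x' = ξ + (1/2)J_η x, z' = (1/4)|x|²η + (1/2)[x,ξ],
ξ' = −(1/4)|η|²x + (1/2)J_η ξ, η' = 0. -/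
theorem hamilton_solution (n m : ℕ) (hn : 1 ≤ n) (hm : 1 ≤ m)
    (J : EuclideanSpace ℝ (Fin m) →ₗ[ℝ]
      (EuclideanSpace ℝ (Fin (2 * n)) →L[ℝ] EuclideanSpace ℝ (Fin (2 * n))))
    (hJ_skew : ∀ (z : EuclideanSpace ℝ (Fin m)) (x y : EuclideanSpace ℝ (Fin (2 * n))),
      ⟪J z x, y⟫ = -⟪x, J z y⟫)
    (hJ_sq : ∀ (z : EuclideanSpace ℝ (Fin m)) (x : EuclideanSpace ℝ (Fin (2 * n))),
      J z (J z x) = -(‖z‖ ^ 2) • x)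
    (br : EuclideanSpace ℝ (Fin (2 * n)) → EuclideanSpace ℝ (Fin (2 * n)) →
      EuclideanSpace ℝ (Fin m))
    (hbr : ∀ (z : EuclideanSpace ℝ (Fin m)) (x y : EuclideanSpace ℝ (Fin (2 * n))),
      ⟪z, br x y⟫ = ⟪J z x, y⟫)
    (η₀ : EuclideanSpace ℝ (Fin m)) (hη₀ : η₀ ≠ 0)
    (ξ₀ : EuclideanSpace ℝ (Fin (2 * n)))
    (x : ℝ → EuclideanSpace ℝ (Fin (2 * n))) (z : ℝ → EuclideanSpace ℝ (Fin m))
    (ξ : ℝ → EuclideanSpace ℝ (Fin (2 * n))) (η : ℝ → EuclideanSpace ℝ (Fin m))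
    (hx : ∀ t, x t = (‖η₀‖ ^ 2)⁻¹ •
      (J η₀) (((1 : EuclideanSpace ℝ (Fin (2 * n)) →L[ℝ] EuclideanSpace ℝ (Fin (2 * n))) -
        NormedSpace.exp (t • J η₀)) ξ₀))
    (hz : ∀ t, z t = (‖ξ₀‖ ^ 2 / (2 * ‖η₀‖ ^ 3) * (‖η₀‖ * t - Real.sin (‖η₀‖ * t))) • η₀)
    (hξ : ∀ t, ξ t = (1 / 2 : ℝ) • (J η₀) (x t) + ξ₀)
    (hη : ∀ t, η t = η₀) :
    x 0 = 0 ∧ z 0 = 0 ∧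
    ∀ t : ℝ,
      HasDerivAt x (ξ t + (1 / 2 : ℝ) • (J (η t)) (x t)) t ∧
      HasDerivAt z ((1 / 4 * ‖x t‖ ^ 2) • η t + (1 / 2 : ℝ) • br (x t) (ξ t)) t ∧
      HasDerivAt ξ ((-(1 / 4) * ‖η t‖ ^ 2) • x t + (1 / 2 : ℝ) • (J (η t)) (ξ t)) t ∧
      HasDerivAt η 0 t :=
  hamilton_solution_general n m J hJ_skew hJ_sq br hbr η₀ hη₀ ξ₀ x z ξ η hx hz hξ hη
end

section
/- There exists a constant c > 0 such that ν(θ) ≥ c·θ for all θ ∈ [0,π). -/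
open scoped Real

/-- The function ν(θ) = (2θ − sin 2θ)/(1 − cos 2θ) for θ ∈ (0,π), with ν(0) = 0. -/
noncomputable def nu (θ : ℝ) : ℝ :=
  if θ = 0 then 0 else (2 * θ - Real.sin (2 * θ)) / (1 - Real.cos (2 * θ))

/-! The constant `c = 1/2` works. Writing `ν(θ) = (θ - sin θ cos θ) / sin² θ`, this amounts to
`2 sin θ cos θ ≤ θ (1 + cos² θ)`, which follows from `|sin θ| ≤ θ` and `2 |cos θ| ≤ 1 + cos² θ`. -/

open Real

lemma nu_eq_of_ne_zero {θ : ℝ} (hθ : θ ≠ 0) : nu θ = (θ - sin θ * cos θ) / sin θ ^ 2 := by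
  have hden : 1 - cos (2 * θ) = 2 * sin θ ^ 2 := by
    rw [cos_two_mul, cos_sq']
    ring
  rw [nu, if_neg hθ, hden, sin_two_mul, ← mul_div_mul_left _ _ two_ne_zero]
  ring_nf

lemma two_mul_sin_mul_cos_le {θ : ℝ} (hθ : 0 ≤ θ) : 2 * sin θ * cos θ ≤ θ * (1 + cos θ ^ 2) :=
  calc 2 * sin θ * cos θ ≤ 2 * (|sin θ| * |cos θ|) := by
        rw [mul_assoc, ← abs_mul]
        exact mul_le_mul_of_nonneg_left (le_abs_self _) two_pos.le
    _ ≤ 2 * (θ * |cos θ|) := by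
        gcongr
        simpa [abs_of_nonneg hθ] using abs_sin_le_abs (x := θ)
    _ ≤ θ * (1 + cos θ ^ 2) := by
        nlinarith [mul_nonneg hθ (sq_nonneg (|cos θ| - 1)), sq_abs (cos θ)]

lemma half_le_nu {θ : ℝ} (hθ : θ ∈ Set.Ico 0 π) : θ / 2 ≤ nu θ := by
  obtain ⟨h0, hπ⟩ := hθ
  rcases h0.eq_or_lt with rfl | hpos
  · simp [nu]
  rw [nu_eq_of_ne_zero hpos.ne', le_div_iff₀ (pow_pos (sin_pos_of_pos_of_lt_pi hpos hπ) 2),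
    sin_sq]
  linarith [two_mul_sin_mul_cos_le h0]

/-- There is a constant `c > 0` such that `ν(θ) ≥ c·θ` for all `θ ∈ [0,π)`. -/
theorem nu_ge_linear :
    ∃ c : ℝ, 0 < c ∧ ∀ θ ∈ Set.Ico (0 : ℝ) π, c * θ ≤ nu θ :=
  ⟨1 / 2, one_half_pos, fun θ hθ => (one_div_mul_eq_div 2 θ).trans_le (half_le_nu hθ)⟩
end

section
/- Define F(θ) = θ²/(θ − sin θ cos θ) for θ > π/2 (the denominator is positive there). Then for every θ₁ with π/2 < θ₁ < π and every θ₂ > π, one has F(θ₁) < F(π) = π < F(θ₂). Consequently, if y > π/2 and θ₁ ∈ (π/2,π), θ₂ > π both satisfy ν(θ) = y, then (θ₁/sin θ₁)² < (θ₂/sin θ₂)². -/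
open scoped Real

/-- F(θ) = θ²/(θ − sin θ cos θ). -/
noncomputable def Ffun (θ : ℝ) : ℝ := θ ^ 2 / (θ - Real.sin θ * Real.cos θ)

/-!
Below π the term sin θ cos θ is negative, so the denominator of F exceeds θ and F(θ) < θ < π.
Above π, |sin θ cos θ| = |sin 2(θ − π)|/2 ≤ θ − π, so π(θ − sin θ cos θ) ≤ π(2θ − π) < θ²,
i.e. F(θ) > π. Finally (θ / sin θ)² = F(θ) ν(θ), so at a common value y > 0 of ν the
comparison of the two squares is the comparison F(θ₁) < π < F(θ₂).
-/

namespace Real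

lemma sin_mul_cos_le_half (θ : ℝ) : sin θ * cos θ ≤ 1 / 2 := by
  have h := sin_le_one (2 * θ)
  rw [sin_two_mul] at h
  linarith

lemma abs_sin_mul_cos_le_abs_sub_pi (θ : ℝ) : |sin θ * cos θ| ≤ |θ - π| := by
  have h : sin θ * cos θ = sin (2 * (θ - π)) / 2 := by
    rw [mul_sub, sin_sub_two_pi, sin_two_mul]
    ring
  rw [h, abs_div, abs_two, div_le_iff₀ two_pos]
  calc |sin (2 * (θ - π))| ≤ |2 * (θ - π)| := abs_sin_le_abs
    _ = |θ - π| * 2 := by rw [abs_mul, abs_two, mul_comm]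

lemma sub_sin_mul_cos_pos {θ : ℝ} (hθ : 1 / 2 < θ) : 0 < θ - sin θ * cos θ := by
  linarith [sin_mul_cos_le_half θ]

end Real

open Real

lemma Ffun_pi : Ffun π = π := by
  simp [Ffun, sq]

lemma Ffun_lt_self {θ : ℝ} (h₁ : π / 2 < θ) (h₂ : θ < π) : Ffun θ < θ := by
  have hθ : 0 < θ := by linarith [pi_pos]
  have hsin : 0 < sin θ := sin_pos_of_pos_of_lt_pi hθ h₂
  have hcos : cos θ < 0 := cos_neg_of_pi_div_two_lt_of_lt h₁ (by linarith)
  have hden : θ < θ - sin θ * cos θ := by nlinarith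
  calc Ffun θ < θ ^ 2 / θ := div_lt_div_of_pos_left (by positivity) hθ hden
    _ = θ := by field_simp

lemma pi_lt_Ffun {θ : ℝ} (h : π < θ) : π < Ffun θ := by
  have hden : 0 < θ - sin θ * cos θ := sub_sin_mul_cos_pos (by linarith [pi_gt_three])
  have hsc : -(θ - π) ≤ sin θ * cos θ := by
    have := abs_sin_mul_cos_le_abs_sub_pi θ
    rw [abs_of_pos (sub_pos.2 h)] at this
    linarith [neg_abs_le (sin θ * cos θ)]
  rw [Ffun, lt_div_iff₀ hden]
  calc π * (θ - sin θ * cos θ) ≤ π * (2 * θ - π) := by nlinarith [pi_pos]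
    _ < θ ^ 2 := by nlinarith [sq_pos_of_pos (sub_pos.2 h)]

lemma nu_of_sin_eq_zero {θ : ℝ} (hs : sin θ = 0) : nu θ = 0 := by
  unfold nu
  split_ifs
  · rfl
  · rw [cos_two_mul_eq_one_sub, hs]
    simp

lemma nu_of_sin_ne_zero {θ : ℝ} (hs : sin θ ≠ 0) :
    nu θ = (θ - sin θ * cos θ) / sin θ ^ 2 := by
  have hθ : θ ≠ 0 := by rintro rfl; simp at hs
  rw [nu, if_neg hθ, cos_two_mul_eq_one_sub, sin_two_mul]
  field_simp
  ring

lemma sq_div_sin_eq_Ffun_mul_nu {θ : ℝ} (hs : sin θ ≠ 0) (hden : θ - sin θ * cos θ ≠ 0) :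
    (θ / sin θ) ^ 2 = Ffun θ * nu θ := by
  rw [nu_of_sin_ne_zero hs, Ffun]
  field_simp

/-- For π/2 < θ₁ < π and θ₂ > π one has F(θ₁) < F(π) = π < F(θ₂); consequently if
y > π/2 and θ₁ ∈ (π/2,π), θ₂ > π both satisfy ν(θ) = y, then
(θ₁/sin θ₁)² < (θ₂/sin θ₂)². -/
theorem Ffun_monotone_across_pi :
    (∀ θ₁ θ₂ : ℝ, π / 2 < θ₁ → θ₁ < π → π < θ₂ → Ffun θ₁ < π ∧ π < Ffun θ₂) ∧
    Ffun π = π ∧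
    (∀ y θ₁ θ₂ : ℝ, π / 2 < y → π / 2 < θ₁ → θ₁ < π → π < θ₂ →
      nu θ₁ = y → nu θ₂ = y →
      (θ₁ / Real.sin θ₁) ^ 2 < (θ₂ / Real.sin θ₂) ^ 2) := by
  refine ⟨fun θ₁ θ₂ h₁ h₂ h₃ => ⟨(Ffun_lt_self h₁ h₂).trans h₂, pi_lt_Ffun h₃⟩, Ffun_pi, ?_⟩
  intro y θ₁ θ₂ hy h₁ h₂ h₃ hν₁ hν₂
  have hy : 0 < y := by linarith [pi_pos]
  have hs₁ : sin θ₁ ≠ 0 := (sin_pos_of_pos_of_lt_pi (by linarith [pi_pos]) h₂).ne'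
  have hs₂ : sin θ₂ ≠ 0 := fun hs => hy.ne' (hν₂ ▸ nu_of_sin_eq_zero hs)
  have hd₁ := (sub_sin_mul_cos_pos (θ := θ₁) (by linarith [pi_gt_three])).ne'
  have hd₂ := (sub_sin_mul_cos_pos (θ := θ₂) (by linarith [pi_gt_three])).ne'
  rw [sq_div_sin_eq_Ffun_mul_nu hs₁ hd₁, sq_div_sin_eq_Ffun_mul_nu hs₂ hd₂, hν₁, hν₂]
  calc Ffun θ₁ * y < π * y := by gcongr; exact (Ffun_lt_self h₁ h₂).trans h₂
    _ < Ffun θ₂ * y := by gcongr; exact pi_lt_Ffun h₃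
end

section
/- There exist constants 0 < C₁ ≤ C₂ < ∞ such that for all x ∈ ℝ^{2n} and z ∈ ℝ^m, C₁·(|x| + |z|^{1/2}) ≤ d(x,z) ≤ C₂·(|x| + |z|^{1/2}); equivalently, d(x,z)² is bounded above and below by constant multiples of |x|² + |z|. -/
/-!
Write `a = |x|`, `b = |z|` and let `θ ∈ (0, π)` solve `ν(θ) = 4b/a²`. Then `d = a · θ / sin θ` and
`a² (4 + ν(θ)) = 4 (a² + b)`, so the theorem reduces to the comparability of `(θ / sin θ)²` and
`4 + ν(θ)` on `(0, π)`. With `sin²θ · ν(θ) = θ - sin θ cos θ` this follows from Jordan's inequality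
for `θ ≤ π/2` and from `cos θ ≤ 0` for `θ ≥ π/2`. The degenerate cases `x = 0` or `z = 0` are
immediate, and `θ` exists by the intermediate value theorem, `ν` tending to `0` at `0` and to `∞`
at `π`.
-/

open scoped Real RealInnerProductSpace

/-- The unique solution θ ∈ [0,π) of ν(θ) = y. -/
noncomputable def thetaOf (y : ℝ) : ℝ :=
  haveI := Classical.propDecidable (∃ θ, θ ∈ Set.Ico 0 π ∧ nu θ = y)
  if h : ∃ θ, θ ∈ Set.Ico 0 π ∧ nu θ = y then h.choose else 0

/-- The Carnot–Carathéodory distance from the identity, as a function of |x| and |z|: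
if x ≠ 0 and z ≠ 0 then d = |x|·θ/sin θ where θ ∈ [0,π) solves ν(θ) = 4|z|/|x|²;
if z = 0 then d = |x|; if x = 0 then d = √(4π|z|). -/
noncomputable def dR (a b : ℝ) : ℝ :=
  if a = 0 then Real.sqrt (4 * π * b)
  else if b = 0 then a
  else a * thetaOf (4 * b / a ^ 2) / Real.sin (thetaOf (4 * b / a ^ 2))

/-- The distance d(x,z) for x ∈ ℝ^{2n}, z ∈ ℝ^m. -/
noncomputable def dH {p q : ℕ} (x : EuclideanSpace ℝ (Fin p))
    (z : EuclideanSpace ℝ (Fin q)) : ℝ :=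
  dR ‖x‖ ‖z‖

open Real Set

lemma sin_mul_cos_eq_sin_two_mul_div_two (θ : ℝ) : sin θ * cos θ = sin (2 * θ) / 2 := by
  rw [sin_two_mul]; ring

lemma nu_eq {θ : ℝ} (h0 : 0 < θ) (hπ : θ < π) :
    nu θ = (θ - sin θ * cos θ) / sin θ ^ 2 := by
  have hs : 0 < sin θ := sin_pos_of_pos_of_lt_pi h0 hπ
  have hcos : 1 - cos (2 * θ) = 2 * sin θ ^ 2 := by
    rw [cos_two_mul']; nlinarith [sin_sq_add_cos_sq θ]
  rw [nu, if_neg h0.ne', sin_two_mul, hcos]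
  field_simp

lemma sin_sq_mul_nu {θ : ℝ} (h0 : 0 < θ) (hπ : θ < π) :
    sin θ ^ 2 * nu θ = θ - sin θ * cos θ := by
  have hs : 0 < sin θ := sin_pos_of_pos_of_lt_pi h0 hπ
  rw [nu_eq h0 hπ]
  field_simp

lemma continuousOn_nu : ContinuousOn nu (Ioo 0 π) := by
  refine ContinuousOn.congr (f := fun θ ↦ (θ - sin θ * cos θ) / sin θ ^ 2) ?_
    fun θ hθ ↦ nu_eq hθ.1 hθ.2
  refine ContinuousOn.div (by fun_prop) (by fun_prop) fun θ hθ ↦ ?_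
  exact pow_ne_zero 2 (sin_pos_of_pos_of_lt_pi hθ.1 hθ.2).ne'

lemma nu_le_four_mul {θ : ℝ} (h0 : 0 < θ) (h1 : θ ≤ 1 / 2) : nu θ ≤ 4 * θ := by
  have hπ := pi_gt_three
  have hsin : 2 / π * θ ≤ sin θ := mul_le_sin h0.le (by linarith)
  have hsin' : θ / 2 ≤ sin θ := by
    refine le_trans ?_ hsin
    rw [div_mul_eq_mul_div, le_div_iff₀ pi_pos]
    nlinarith [pi_lt_four]
  have hnum : θ - sin θ * cos θ ≤ θ ^ 3 := by
    have := sin_gt_sub_cube (by linarith : (0 : ℝ) < 2 * θ)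
    rw [sin_mul_cos_eq_sin_two_mul_div_two]; nlinarith [pow_pos h0 3]
  rw [nu_eq h0 (by linarith), div_le_iff₀ (by nlinarith)]
  nlinarith [mul_le_mul_of_nonneg_left (pow_le_pow_left₀ (by positivity) hsin' 2)
    (by positivity : 0 ≤ 4 * θ)]

lemma one_div_sq_le_nu {θ : ℝ} (h1 : π / 2 ≤ θ) (hπ : θ < π) : 1 / (π - θ) ^ 2 ≤ nu θ := by
  have h0 : 0 < θ := by linarith [pi_pos]
  have hs : 0 < sin θ := sin_pos_of_pos_of_lt_pi h0 hπ
  have hsin : sin θ ≤ π - θ := by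
    rw [← sin_pi_sub]; exact sin_le (by linarith)
  have hcos : cos θ ≤ 0 := cos_nonpos_of_pi_div_two_le_of_le h1 (by linarith)
  have hnum : 1 ≤ θ - sin θ * cos θ := by
    nlinarith [mul_nonpos_of_nonneg_of_nonpos hs.le hcos, pi_gt_three]
  rw [nu_eq h0 hπ, div_le_div_iff₀ (by nlinarith) (by positivity)]
  nlinarith [pow_le_pow_left₀ hs.le hsin 2]

lemma exists_nu_eq {y : ℝ} (hy : 0 < y) : ∃ θ ∈ Ioo 0 π, nu θ = y := by
  have hπ := pi_gt_three
  set α := min (1 / 2) (y / 4)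
  set β := π - 1 / (1 + y) with hβ
  have hα0 : 0 < α := lt_min (by norm_num) (by positivity)
  have hδ : 1 / (1 + y) < 1 := (div_lt_one (by linarith)).2 (by linarith)
  have hδ0 : 0 < 1 / (1 + y) := by positivity
  have hαβ : Icc α β ⊆ Ioo 0 π := Icc_subset_Ioo hα0 (by linarith)
  have hνα : nu α ≤ y := by
    linarith [nu_le_four_mul hα0 (min_le_left _ _), min_le_right (1 / 2) (y / 4)]
  have hνβ : y ≤ nu β := by
    refine le_trans ?_ (one_div_sq_le_nu (by linarith) (by linarith))
    rw [hβ, sub_sub_cancel, div_pow, one_pow, one_div_one_div]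
    nlinarith
  obtain ⟨θ, hθ, hνθ⟩ := intermediate_value_Icc (by linarith [min_le_left (1 / 2) (y / 4)])
    (continuousOn_nu.mono hαβ) ⟨hνα, hνβ⟩
  exact ⟨θ, hαβ hθ, hνθ⟩

lemma thetaOf_spec {y : ℝ} (hy : 0 < y) : thetaOf y ∈ Ioo 0 π ∧ nu (thetaOf y) = y := by
  obtain ⟨θ, hθ, hνθ⟩ := exists_nu_eq hy
  have h : ∃ θ, θ ∈ Ico 0 π ∧ nu θ = y := ⟨θ, Ioo_subset_Ico_self hθ, hνθ⟩
  rw [thetaOf, dif_pos h]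
  obtain ⟨⟨h0, hπ⟩, hν⟩ := h.choose_spec
  refine ⟨⟨h0.lt_of_ne fun h0' ↦ hy.ne ?_, hπ⟩, hν⟩
  rwa [← h0', nu, if_pos rfl] at hν

lemma four_add_nu_div_eight_le_sq_div_sin {θ : ℝ} (h0 : 0 < θ) (hπ : θ < π) :
    (4 + nu θ) / 8 ≤ (θ / sin θ) ^ 2 := by
  have hs : 0 < sin θ := sin_pos_of_pos_of_lt_pi h0 hπ
  have hsin : sin θ ≤ θ := sin_le h0.le
  have hnum : θ - sin θ * cos θ ≤ 4 * θ ^ 2 := by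
    rw [sin_mul_cos_eq_sin_two_mul_div_two]
    rcases le_or_gt (2 * θ) 1 with h | h
    · nlinarith [sin_gt_sub_cube (by linarith : (0 : ℝ) < 2 * θ)]
    · nlinarith [neg_one_le_sin (2 * θ)]
  rw [div_pow, le_div_iff₀ (by positivity), div_mul_eq_mul_div, div_le_iff₀ (by norm_num),
    add_mul, mul_comm (nu θ), sin_sq_mul_nu h0 hπ]
  nlinarith [pow_le_pow_left₀ hs.le hsin 2]

lemma sq_div_sin_le_pi_mul_four_add_nu {θ : ℝ} (h0 : 0 < θ) (hπ : θ < π) :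
    (θ / sin θ) ^ 2 ≤ π * (4 + nu θ) := by
  have hs : 0 < sin θ := sin_pos_of_pos_of_lt_pi h0 hπ
  have hπ4 := pi_lt_four
  suffices θ ^ 2 ≤ π * (4 * sin θ ^ 2 + (θ - sin θ * cos θ)) by
    have hν : π * (4 + nu θ) * sin θ ^ 2 = π * (4 * sin θ ^ 2 + (θ - sin θ * cos θ)) := by
      rw [← sin_sq_mul_nu h0 hπ]; ring
    rwa [div_pow, div_le_iff₀ (by positivity), hν]
  rcases le_or_gt θ (π / 2) with h | h
  · have hsin : 2 / π * θ ≤ sin θ := mul_le_sin h0.le h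
    have hnum : 0 ≤ θ - sin θ * cos θ := by
      rw [sin_mul_cos_eq_sin_two_mul_div_two]; linarith [sin_le (by linarith : (0 : ℝ) ≤ 2 * θ)]
    have hsq : 4 * θ ^ 2 ≤ π ^ 2 * sin θ ^ 2 := by
      rw [div_mul_eq_mul_div, div_le_iff₀ pi_pos] at hsin
      nlinarith [pi_pos]
    nlinarith [pi_pos]
  · have hcos : cos θ ≤ 0 := cos_nonpos_of_pi_div_two_le_of_le h.le (by linarith)
    nlinarith [mul_nonpos_of_nonneg_of_nonpos hs.le hcos, pi_pos]

lemma dR_of_pos {a b : ℝ} (ha : 0 < a) (hb : 0 < b) :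
    dR a b = a * (thetaOf (4 * b / a ^ 2) / sin (thetaOf (4 * b / a ^ 2))) := by
  rw [dR, if_neg ha.ne', if_neg hb.ne', mul_div_assoc]

lemma dR_nonneg {a b : ℝ} (ha : 0 ≤ a) (hb : 0 ≤ b) : 0 ≤ dR a b := by
  rcases ha.eq_or_lt with rfl | ha
  · rw [dR, if_pos rfl]; exact sqrt_nonneg _
  rcases hb.eq_or_lt with rfl | hb
  · rw [dR, if_neg ha.ne', if_pos rfl]; exact ha.le
  have hθ := (thetaOf_spec (by positivity : 0 < 4 * b / a ^ 2)).1
  rw [dR_of_pos ha hb]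
  exact mul_nonneg ha.le (div_nonneg hθ.1.le (sin_pos_of_pos_of_lt_pi hθ.1 hθ.2).le)

lemma dR_sq_bounds {a b : ℝ} (ha : 0 ≤ a) (hb : 0 ≤ b) :
    (a ^ 2 + b) / 2 ≤ dR a b ^ 2 ∧ dR a b ^ 2 ≤ 4 * π * (a ^ 2 + b) := by
  have hπ := pi_gt_three
  rcases ha.eq_or_lt with rfl | ha
  · rw [dR, if_pos rfl, sq_sqrt (by positivity)]
    constructor <;> nlinarith
  rcases hb.eq_or_lt with rfl | hb
  · rw [dR, if_neg ha.ne', if_pos rfl]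
    constructor <;> nlinarith
  have hy : 0 < 4 * b / a ^ 2 := by positivity
  obtain ⟨⟨hθ0, hθπ⟩, hνθ⟩ := thetaOf_spec hy
  have hν : a ^ 2 * (4 + nu (thetaOf (4 * b / a ^ 2))) = 4 * (a ^ 2 + b) := by
    rw [hνθ]; field_simp
  have hlow := four_add_nu_div_eight_le_sq_div_sin hθ0 hθπ
  have hup := sq_div_sin_le_pi_mul_four_add_nu hθ0 hθπ
  rw [dR_of_pos ha hb, mul_pow]
  constructor <;> nlinarith [sq_nonneg a]

lemma dR_bounds {a b : ℝ} (ha : 0 ≤ a) (hb : 0 ≤ b) :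
    1 / 2 * (a + sqrt b) ≤ dR a b ∧ dR a b ≤ 2 * sqrt π * (a + sqrt b) := by
  obtain ⟨hlow, hup⟩ := dR_sq_bounds ha hb
  have hsb := sq_sqrt hb
  have hsπ := sq_sqrt pi_pos.le
  have hd := dR_nonneg ha hb
  have hroot := sqrt_nonneg b
  constructor
  · refine le_of_pow_le_pow_left₀ two_ne_zero hd ?_
    nlinarith [sq_nonneg (a - sqrt b)]
  · refine le_of_pow_le_pow_left₀ two_ne_zero (by positivity) ?_
    nlinarith [mul_nonneg ha hroot, pi_pos]

theorem dist_comparable_general (n m : ℕ) :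
    ∃ C₁ C₂ : ℝ, 0 < C₁ ∧ C₁ ≤ C₂ ∧
      ∀ (x : EuclideanSpace ℝ (Fin (2 * n))) (z : EuclideanSpace ℝ (Fin m)),
        C₁ * (‖x‖ + Real.sqrt ‖z‖) ≤ dH x z ∧
        dH x z ≤ C₂ * (‖x‖ + Real.sqrt ‖z‖) := by
  have hπ : 1 ≤ sqrt π := one_le_sqrt.2 (by linarith [pi_gt_three])
  exact ⟨1 / 2, 2 * sqrt π, by norm_num, by linarith,
    fun x z ↦ dR_bounds (norm_nonneg x) (norm_nonneg z)⟩

/-- There exist constants 0 < C₁ ≤ C₂ < ∞ with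
C₁(|x| + |z|^{1/2}) ≤ d(x,z) ≤ C₂(|x| + |z|^{1/2}) for all x ∈ ℝ^{2n}, z ∈ ℝ^m. -/
theorem dist_comparable (n m : ℕ) (hn : 1 ≤ n) (hm : 1 ≤ m) :
    ∃ C₁ C₂ : ℝ, 0 < C₁ ∧ C₁ ≤ C₂ ∧
      ∀ (x : EuclideanSpace ℝ (Fin (2 * n))) (z : EuclideanSpace ℝ (Fin m)),
        C₁ * (‖x‖ + Real.sqrt ‖z‖) ≤ dH x z ∧
        dH x z ≤ C₂ * (‖x‖ + Real.sqrt ‖z‖) :=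
  dist_comparable_general n m
end

section
/- Let a, b ∈ ℝ^m and let w = |a|² − |b|² + 2i(a·b) ∈ ℂ (so w = (a+bi)·(a+bi) under the complex bilinear dot product). Let s ∈ ℂ satisfy s² = w and Im s ≥ 0. Then |a| − |b| ≤ |Re s| ≤ |a| and 0 ≤ Im s ≤ |b|. Moreover, equality holds in |Re s| = |a| (equivalently in Im s = |b|, when b ≠ 0) if and only if a and b are parallel, i.e. a = r·b for some r ∈ ℝ or b = 0. -/
open scoped RealInnerProductSpace

/-!
Write `s = x + y i`, `A = ‖a‖`, `B = ‖b‖`. Then `s² = w` says `x² - y² = A² - B²` and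
`x y = ⟪a, b⟫`, and under the first relation `(x y)² - (A B)² = (x² - A²)(x² + B²)`.
So Cauchy–Schwarz `|⟪a, b⟫| ≤ A B` gives `x² ≤ A²` (and symmetrically `y² ≤ B²`), while
equality in it, i.e. `a ∥ b`, is equivalent to `x² = A²`.
-/

section RealAlgebra

variable {x y A B : ℝ}

lemma mul_sq_sub_mul_sq_of_sq_sub_sq_eq (h : x ^ 2 - y ^ 2 = A ^ 2 - B ^ 2) :
    (x * y) ^ 2 - (A * B) ^ 2 = (x ^ 2 - A ^ 2) * (x ^ 2 + B ^ 2) := by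
  have hy : y ^ 2 = x ^ 2 - A ^ 2 + B ^ 2 := by linarith
  rw [mul_pow, mul_pow, hy]
  ring

lemma sq_le_sq_of_sq_sub_sq_eq_of_abs_mul_le (h : x ^ 2 - y ^ 2 = A ^ 2 - B ^ 2)
    (hxy : |x * y| ≤ A * B) : x ^ 2 ≤ A ^ 2 := by
  have hprod : (x * y) ^ 2 ≤ (A * B) ^ 2 := sq_le_sq.mpr (hxy.trans (le_abs_self _))
  by_contra! hlt
  have := mul_sq_sub_mul_sq_of_sq_sub_sq_eq h
  nlinarith [sq_nonneg B]

lemma sq_eq_sq_iff_mul_sq_eq_of_sq_sub_sq_eq (h : x ^ 2 - y ^ 2 = A ^ 2 - B ^ 2) :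
    x ^ 2 = A ^ 2 ↔ (x * y) ^ 2 = (A * B) ^ 2 := by
  have hfac := mul_sq_sub_mul_sq_of_sq_sub_sq_eq h
  constructor
  · intro hx
    linarith [show (x ^ 2 - A ^ 2) * (x ^ 2 + B ^ 2) = 0 by rw [hx, sub_self, zero_mul]]
  · intro hxy
    rcases mul_eq_zero.mp (hfac.symm.trans (sub_eq_zero.mpr hxy)) with hx | hxB
    · linarith
    -- `x² + B² = 0` forces `x = B = 0`, and then `y² + A² = 0`.
    · have hx : x ^ 2 = 0 := by nlinarith [sq_nonneg x, sq_nonneg B]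
      nlinarith [sq_nonneg y, sq_nonneg A]

lemma sub_le_abs_of_sq_sub_sq_eq (hB : 0 ≤ B) (h : x ^ 2 - y ^ 2 = A ^ 2 - B ^ 2) :
    A - B ≤ |x| := by
  rcases le_or_gt A B with hAB | hBA
  · linarith [abs_nonneg x]
  · have : (A - B) ^ 2 ≤ x ^ 2 := by nlinarith [sq_nonneg y]
    exact (le_abs_self _).trans (sq_le_sq.mp this)

lemma abs_eq_iff_sq_eq_sq (hA : 0 ≤ A) : |x| = A ↔ x ^ 2 = A ^ 2 := by
  rw [← sq_abs x, sq_eq_sq₀ (abs_nonneg x) hA]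

end RealAlgebra

lemma Complex.re_sq_sub_im_sq_and_re_mul_im_of_sq_eq {s : ℂ} {c t : ℝ}
    (hs : s ^ 2 = (c : ℂ) + 2 * (t : ℂ) * Complex.I) :
    s.re ^ 2 - s.im ^ 2 = c ∧ s.re * s.im = t := by
  have hre := congrArg Complex.re hs
  have him := congrArg Complex.im hs
  simp only [sq, Complex.mul_re, Complex.mul_im, Complex.add_re, Complex.add_im,
    Complex.ofReal_re, Complex.ofReal_im, Complex.I_re, Complex.I_im, Complex.re_ofNat,
    Complex.im_ofNat] at hre him
  constructor <;> linarith

lemma abs_real_inner_eq_norm_mul_norm_iff {F : Type*} [NormedAddCommGroup F]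
    [InnerProductSpace ℝ F] (a b : F) :
    |⟪a, b⟫| = ‖a‖ * ‖b‖ ↔ (∃ r : ℝ, a = r • b) ∨ b = 0 := by
  rw [real_inner_comm, mul_comm, ← Real.norm_eq_abs, or_comm]
  exact (norm_inner_eq_norm_tfae (𝕜 := ℝ) b a).out 0 2

/-- Let a, b ∈ ℝ^m, w = |a|² − |b|² + 2i(a·b), and let s ∈ ℂ satisfy s² = w, Im s ≥ 0.
Then |a| − |b| ≤ |Re s| ≤ |a| and 0 ≤ Im s ≤ |b|; equality |Re s| = |a| (equivalently
Im s = |b| when b ≠ 0) holds iff a and b are parallel (a = r·b for some r ∈ ℝ, or b = 0). -/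
theorem sqrt_complex_re_im_bounds (m : ℕ) (a b : EuclideanSpace ℝ (Fin m)) (s : ℂ)
    (hs : s ^ 2 = ((‖a‖ ^ 2 - ‖b‖ ^ 2 : ℝ) : ℂ) + 2 * (⟪a, b⟫ : ℝ) * Complex.I)
    (him : 0 ≤ s.im) :
    (‖a‖ - ‖b‖ ≤ |s.re| ∧ |s.re| ≤ ‖a‖) ∧
    (0 ≤ s.im ∧ s.im ≤ ‖b‖) ∧
    (|s.re| = ‖a‖ ↔ ((∃ r : ℝ, a = r • b) ∨ b = 0)) ∧
    (b ≠ 0 → (s.im = ‖b‖ ↔ ((∃ r : ℝ, a = r • b) ∨ b = 0))) := by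
  obtain ⟨hsq, hmul⟩ := Complex.re_sq_sub_im_sq_and_re_mul_im_of_sq_eq hs
  have hA := norm_nonneg a
  have hB := norm_nonneg b
  have hsq' : s.im ^ 2 - s.re ^ 2 = ‖b‖ ^ 2 - ‖a‖ ^ 2 := by linarith
  have hCS : |s.re * s.im| ≤ ‖a‖ * ‖b‖ := hmul ▸ abs_real_inner_le_norm a b
  have hre : s.re ^ 2 ≤ ‖a‖ ^ 2 := sq_le_sq_of_sq_sub_sq_eq_of_abs_mul_le hsq hCS
  have him' : s.im ^ 2 ≤ ‖b‖ ^ 2 :=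
    sq_le_sq_of_sq_sub_sq_eq_of_abs_mul_le hsq' (by rwa [mul_comm, mul_comm ‖b‖])
  have hpar : |s.re| = ‖a‖ ↔ (∃ r : ℝ, a = r • b) ∨ b = 0 := by
    rw [abs_eq_iff_sq_eq_sq hA, sq_eq_sq_iff_mul_sq_eq_of_sq_sub_sq_eq hsq,
      ← abs_eq_iff_sq_eq_sq (mul_nonneg hA hB), hmul, abs_real_inner_eq_norm_mul_norm_iff]
  refine ⟨⟨sub_le_abs_of_sq_sub_sq_eq hB hsq, abs_le_of_sq_le_sq hre hA⟩,
    ⟨him, (le_abs_self _).trans (abs_le_of_sq_le_sq him' hB)⟩, hpar, fun _ => ?_⟩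
  rw [← hpar, ← sq_eq_sq₀ him hB, abs_eq_iff_sq_eq_sq hA]
  constructor <;> intro h <;> linarith
end

section
/- For every α ∈ ℝ and every β ∈ (0,π), one has Re((α + iβ)·coth(α + iβ)) ≥ β·cot β, with equality if and only if α = 0. (Here coth ζ = cosh ζ / sinh ζ; note sinh(α+iβ) ≠ 0 for β ∈ (0,π).) Explicitly, Re((α+iβ) coth(α+iβ)) − β cot β = sinh²α·(α coth α − β cot β)/(cosh²α − cos²β), where α coth α is interpreted as 1 at α = 0. -/
/-!
Writing `α + iβ = z`, one has `sinh z = sinh α cos β + i cosh α sin β`,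
`cosh z = cosh α cos β + i sinh α sin β` and `|sinh z|² = cosh² α - cos² β`, so
`Re (z coth z) = (α sinh α cosh α + β sin β cos β) / (cosh² α - cos² β)`.
Subtracting `β cot β` gives the stated identity, whose right-hand side is positive for
`α ≠ 0` because `β cot β < 1 < α coth α`: the latter is `tanh α < α`, the former is `β < tan β`
on `(0, π/2)` and trivial on `[π/2, π)`.
-/

open scoped Real

namespace Real

lemma sinh_lt_mul_cosh {x : ℝ} (hx : 0 < x) : sinh x < x * cosh x := by
  have hmono : StrictMonoOn (fun t : ℝ => t * cosh t - sinh t) (Set.Ici 0) := by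
    refine strictMonoOn_of_deriv_pos (convex_Ici 0) (by fun_prop) fun t ht => ?_
    rw [interior_Ici, Set.mem_Ioi] at ht
    have hderiv : deriv (fun t : ℝ => t * cosh t - sinh t) t = t * sinh t := by
      simp
    rw [hderiv]
    positivity
  simpa using hmono Set.self_mem_Ici hx.le hx

lemma one_lt_mul_cosh_div_sinh {x : ℝ} (hx : x ≠ 0) : 1 < x * cosh x / sinh x := by
  have key : ∀ {t : ℝ}, 0 < t → 1 < t * cosh t / sinh t := fun ht =>
    (one_lt_div (sinh_pos_iff.2 ht)).2 (sinh_lt_mul_cosh ht)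
  rcases hx.lt_or_gt with hneg | hpos
  · simpa [neg_div_neg_eq] using key (neg_pos.2 hneg)
  · exact key hpos

lemma mul_cos_lt_sin {x : ℝ} (h0 : 0 < x) (hπ : x < π) : x * cos x < sin x := by
  have hsin : 0 < sin x := sin_pos_of_pos_of_lt_pi h0 hπ
  rcases le_or_gt (cos x) 0 with hcos | hcos
  · nlinarith
  · have hx : x < π / 2 := by
      by_contra! h
      linarith [cos_nonpos_of_pi_div_two_le_of_le h (by linarith [pi_pos])]
    have := lt_tan h0 hx
    rwa [tan_eq_sin_div_cos, lt_div_iff₀ hcos] at this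

lemma mul_cos_div_sin_lt_one {x : ℝ} (h0 : 0 < x) (hπ : x < π) : x * (cos x / sin x) < 1 := by
  rw [← mul_div_assoc, div_lt_one (sin_pos_of_pos_of_lt_pi h0 hπ)]
  exact mul_cos_lt_sin h0 hπ

lemma cos_sq_lt_cosh_sq {x : ℝ} (hx : x ≠ 0) (y : ℝ) : cos y ^ 2 < cosh x ^ 2 := by
  have : 0 < sinh x ^ 2 := by positivity
  nlinarith [cosh_sq x, cos_sq_le_one y]

end Real

namespace Complex

lemma sinh_ofReal_add_ofReal_mul_I (x y : ℝ) :
    sinh (x + y * I) = ⟨Real.sinh x * Real.cos y, Real.cosh x * Real.sin y⟩ := by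
  apply Complex.ext <;> simp [sinh_add, sinh_mul_I, cosh_mul_I, ← ofReal_sinh, ← ofReal_cosh,
    ← ofReal_sin, ← ofReal_cos]

lemma cosh_ofReal_add_ofReal_mul_I (x y : ℝ) :
    cosh (x + y * I) = ⟨Real.cosh x * Real.cos y, Real.sinh x * Real.sin y⟩ := by
  apply Complex.ext <;> simp [cosh_add, sinh_mul_I, cosh_mul_I, ← ofReal_sinh, ← ofReal_cosh,
    ← ofReal_sin, ← ofReal_cos]

lemma re_mul_cosh_div_sinh (x y : ℝ) :
    ((x + y * I) * (cosh (x + y * I) / sinh (x + y * I))).re =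
      (x * Real.sinh x * Real.cosh x + y * Real.sin y * Real.cos y) /
        (Real.cosh x ^ 2 - Real.cos y ^ 2) := by
  have hnormSq : normSq (sinh (x + y * I)) = Real.cosh x ^ 2 - Real.cos y ^ 2 := by
    rw [sinh_ofReal_add_ofReal_mul_I, normSq_mk]
    linear_combination
      Real.cosh x ^ 2 * Real.sin_sq_add_cos_sq y - Real.cos y ^ 2 * Real.cosh_sq_sub_sinh_sq x
  rw [← mul_div_assoc, div_re, hnormSq, ← add_div]
  congr 1
  simp only [mul_re, mul_im, add_re, add_im, ofReal_re, ofReal_im, I_re, I_im,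
    sinh_ofReal_add_ofReal_mul_I, cosh_ofReal_add_ofReal_mul_I]
  linear_combination (x * Real.sinh x * Real.cosh x) * Real.sin_sq_add_cos_sq y +
    (y * Real.sin y * Real.cos y) * Real.cosh_sq_sub_sinh_sq x

end Complex

open Real in
lemma re_mul_coth_sub_mul_cot (x y : ℝ) (hy : sin y ≠ 0) :
    (((x : ℂ) + (y : ℂ) * Complex.I) *
        (Complex.cosh ((x : ℂ) + (y : ℂ) * Complex.I) /
          Complex.sinh ((x : ℂ) + (y : ℂ) * Complex.I))).re - y * (cos y / sin y) =
      sinh x ^ 2 * ((if x = 0 then (1 : ℝ) else x * cosh x / sinh x) - y * (cos y / sin y)) /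
        (cosh x ^ 2 - cos y ^ 2) := by
  rw [Complex.re_mul_cosh_div_sinh]
  split_ifs with hx
  · subst hx
    simp only [sinh_zero, cosh_zero, zero_mul, zero_add, one_pow, ← sin_sq]
    field_simp
    ring
  · have hsinh : sinh x ≠ 0 := sinh_ne_zero.2 hx
    have hD : cosh x ^ 2 - cos y ^ 2 ≠ 0 := (sub_pos.2 (cos_sq_lt_cosh_sq hx y)).ne'
    field_simp
    linear_combination -(y * cos y) * cosh_sq_sub_sinh_sq x + y * cos y * sin_sq_add_cos_sq y

/-- For α ∈ ℝ, β ∈ (0,π): Re((α+iβ)coth(α+iβ)) ≥ β cot β, with equality iff α = 0;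
explicitly Re((α+iβ)coth(α+iβ)) − β cot β = sinh²α (α coth α − β cot β)/(cosh²α − cos²β),
where α coth α is interpreted as 1 at α = 0. -/
theorem re_coth_ge_cot (α β : ℝ) (hβ0 : 0 < β) (hβπ : β < π) :
    β * (Real.cos β / Real.sin β) ≤
      (((α : ℂ) + (β : ℂ) * Complex.I) *
        (Complex.cosh ((α : ℂ) + (β : ℂ) * Complex.I) /
          Complex.sinh ((α : ℂ) + (β : ℂ) * Complex.I))).re ∧
    ((((α : ℂ) + (β : ℂ) * Complex.I) *
        (Complex.cosh ((α : ℂ) + (β : ℂ) * Complex.I) /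
          Complex.sinh ((α : ℂ) + (β : ℂ) * Complex.I))).re =
        β * (Real.cos β / Real.sin β) ↔ α = 0) ∧
    (((α : ℂ) + (β : ℂ) * Complex.I) *
        (Complex.cosh ((α : ℂ) + (β : ℂ) * Complex.I) /
          Complex.sinh ((α : ℂ) + (β : ℂ) * Complex.I))).re -
        β * (Real.cos β / Real.sin β) =
      Real.sinh α ^ 2 *
        ((if α = 0 then (1 : ℝ) else α * Real.cosh α / Real.sinh α) -
          β * (Real.cos β / Real.sin β)) /
        (Real.cosh α ^ 2 - Real.cos β ^ 2) := by
  have hid := re_mul_coth_sub_mul_cot α β (Real.sin_pos_of_pos_of_lt_pi hβ0 hβπ).ne'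
  obtain rfl | hα := eq_or_ne α 0
  · have hzero := hid.trans (by simp : _ = (0 : ℝ))
    exact ⟨sub_nonneg.1 hzero.ge, iff_of_true (sub_eq_zero.1 hzero) rfl, hid⟩
  · have hcot_lt_coth : β * (Real.cos β / Real.sin β) < α * Real.cosh α / Real.sinh α := by
      linarith [Real.one_lt_mul_cosh_div_sinh hα, Real.mul_cos_div_sin_lt_one hβ0 hβπ]
    refine (fun hpos => ⟨(sub_pos.1 hpos).le, iff_of_false (sub_pos.1 hpos).ne' hα, hid⟩) ?_
    rw [hid, if_neg hα]
    exact div_pos (mul_pos (by positivity) (sub_pos.2 hcot_lt_coth))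
      (sub_pos.2 (Real.cos_sq_lt_cosh_sq hα β))
end

section
/- Let m, n, k ≥ 1 be integers, Σ ⊂ ℝ^k, r > 0, B(0,r) the open ball of radius r in ℝ^m, and let g : B(0,r) × Σ → ℝ and K : ℝ^{2n} × B(0,r) × Σ → ℂ be measurable. Define F(x,σ) := ∫_{B(0,r)} e^{−|x|² g(λ,σ)} K(x,λ,σ) dλ. Suppose (1) there is b₁ > 0 with g(λ,σ) ≥ b₁|λ|² for all λ ∈ B(0,r), σ ∈ Σ, and (2) k₂ := sup{|K(x,λ,σ)| : x ∈ ℝ^{2n}, λ ∈ B(0,r), σ ∈ Σ} < ∞. Then there is C₂' > 0 with |F(x,σ)| ≤ C₂'/|x|^m for all x ≠ 0 and σ ∈ Σ. If in addition (3) there is b₂ > 0 with g(λ,σ) ≤ b₂|λ|² for all λ ∈ B(0,r), σ ∈ Σ, and (4) there is a function ε : (0,∞) → [0,r] with ρ·ε(ρ) → ∞ as ρ → ∞ and k₁ := inf{Re K(x,λ,σ) : x ∈ ℝ^{2n}, λ ∈ B(0,ε(|x|)), σ ∈ Σ} > 0, then there exist C₁' > 0 and x₀ > 0 such that Re F(x,σ)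 ≥ C₁'/|x|^m for all |x| ≥ x₀ and all σ ∈ Σ. -/
/-! The hypothesis `g ≥ b₁|λ|²` dominates the integrand by `k₂ e^{-b₁|x|²|λ|²}`, a Gaussian whose
integral over `ℝ^m` is a constant times `|x|^{-m}`. For the lower bound split `B(0,r)` at radius
`ε(|x|) ≥ 1/|x|`. On `B(0,1/|x|)` we have `|x|²g ≤ b₂`, so the real part of the integrand is at
least `k₁e^{-b₂}` there, contributing `k₁e^{-b₂}vol(B(0,1))/|x|^m`; it is nonnegative on the rest
of `B(0,ε(|x|))`. Outside `B(0,ε(|x|))` half of the Gaussian decay yields the extra factor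
`e^{-b₁(|x|ε(|x|))²/2} → 0`, so the tail is eventually at most half of the main term. -/

open scoped Real
open MeasureTheory Filter
open Metric Module Topology

theorem mul_measureReal_le_re_setIntegral {α : Type*} [MeasurableSpace α] {μ : Measure α}
    {f : α → ℂ} {s u : Set α} {c : ℝ} (hs : MeasurableSet s) (hu : MeasurableSet u) (hus : u ⊆ s)
    (hμu : μ u ≠ ⊤) (hf : IntegrableOn f s μ) (hf_nonneg : ∀ v ∈ s, 0 ≤ (f v).re)
    (hf_ge : ∀ v ∈ u, c ≤ (f v).re) :
    c * μ.real u ≤ (∫ v in s, f v ∂μ).re := by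
  have hre : IntegrableOn (fun v => (f v).re) s μ := hf.re
  calc c * μ.real u ≤ ∫ v in u, (f v).re ∂μ :=
        setIntegral_ge_of_const_le_real hu hμu hf_ge (hre.mono_set hus)
    _ ≤ ∫ v in s, (f v).re ∂μ :=
        setIntegral_mono_set hre (ae_restrict_of_forall_mem hs hf_nonneg) hus.eventuallyLE
    _ = (∫ v in s, f v ∂μ).re := integral_re hf

theorem Filter.Tendsto.eventually_mul_exp_neg_mul_sq_le {α : Type*} {l : Filter α} {u : α → ℝ}
    (hu : Tendsto u l atTop) (C : ℝ) {b c : ℝ} (hb : 0 < b) (hc : 0 < c) :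
    ∀ᶠ y in l, C * Real.exp (-(b * u y ^ 2)) ≤ c := by
  have h : Tendsto (fun y => C * Real.exp (-(b * u y ^ 2))) l (𝓝 0) := by
    simpa using (Real.tendsto_exp_neg_atTop_nhds_zero.comp
      (((tendsto_pow_atTop two_ne_zero).const_mul_atTop hb).comp hu)).const_mul C
  exact h.eventually (eventually_le_nhds hc)

section GaussianBounds

variable {V : Type*} [NormedAddCommGroup V] [InnerProductSpace ℝ V] [FiniteDimensional ℝ V]
  [MeasurableSpace V] [BorelSpace V] {Φ : V → ℝ} {a : V → ℂ} {s : Set V} {t M : ℝ}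

theorem integral_exp_neg_mul_sq_mul_sq_norm {c : ℝ} (hc : 0 < c) (ht : 0 < t) :
    ∫ v : V, Real.exp (-(c * t ^ 2 * ‖v‖ ^ 2))
      = (π / c) ^ (finrank ℝ V / 2 : ℝ) / t ^ finrank ℝ V := by
  have h := GaussianFourier.integral_rexp_neg_mul_sq_norm (V := V) (mul_pos hc (pow_pos ht 2))
  simp only [neg_mul] at h
  rw [h, ← div_div, Real.div_rpow (by positivity) (by positivity), ← Real.rpow_natCast t 2,
    ← Real.rpow_mul ht.le, ← Real.rpow_natCast t (finrank ℝ V)]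
  congr 2
  push_cast
  ring

theorem integrable_exp_neg_mul_sq_mul_sq_norm {c : ℝ} (hc : 0 < c) (ht : 0 < t) :
    Integrable fun v : V => Real.exp (-(c * t ^ 2 * ‖v‖ ^ 2)) := by
  refine .of_integral_ne_zero ?_
  rw [integral_exp_neg_mul_sq_mul_sq_norm hc ht]
  positivity

theorem norm_setIntegral_le_of_norm_le_gaussian {E : Type*} [NormedAddCommGroup E]
    [NormedSpace ℝ E] {f : V → E} {A c : ℝ} (hA : 0 ≤ A) (hc : 0 < c)
    (ht : 0 < t) (hs : MeasurableSet s)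
    (hf : ∀ v ∈ s, ‖f v‖ ≤ A * Real.exp (-(c * t ^ 2 * ‖v‖ ^ 2))) :
    ‖∫ v in s, f v‖ ≤ A * (π / c) ^ (finrank ℝ V / 2 : ℝ) / t ^ finrank ℝ V := by
  have hG := (integrable_exp_neg_mul_sq_mul_sq_norm (V := V) hc ht).const_mul A
  calc ‖∫ v in s, f v‖ ≤ ∫ v in s, A * Real.exp (-(c * t ^ 2 * ‖v‖ ^ 2)) :=
        norm_integral_le_of_norm_le hG.integrableOn (ae_restrict_of_forall_mem hs hf)
    _ ≤ ∫ v, A * Real.exp (-(c * t ^ 2 * ‖v‖ ^ 2)) :=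
        setIntegral_le_integral hG (.of_forall fun v => by positivity)
    _ = _ := by rw [integral_const_mul, integral_exp_neg_mul_sq_mul_sq_norm hc ht, mul_div_assoc]

theorem norm_cexp_neg_ofReal_mul (u : ℝ) (z : ℂ) :
    ‖Complex.exp (-(u : ℂ)) * z‖ = Real.exp (-u) * ‖z‖ := by
  rw [norm_mul, Complex.norm_exp, Complex.neg_re, Complex.ofReal_re]

theorem re_cexp_neg_ofReal_mul (u : ℝ) (z : ℂ) :
    (Complex.exp (-(u : ℂ)) * z).re = Real.exp (-u) * z.re := by
  rw [← Complex.ofReal_neg, ← Complex.ofReal_exp, Complex.re_ofReal_mul]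

theorem integrableOn_cexp_neg_mul (hΦ : Measurable Φ) (ha : Measurable a)
    (hs : MeasurableSet s) (hμs : volume s ≠ ⊤) (hΦ_nonneg : ∀ v ∈ s, 0 ≤ Φ v)
    (ha_le : ∀ v ∈ s, ‖a v‖ ≤ M) :
    IntegrableOn (fun v => Complex.exp (-((t ^ 2 * Φ v : ℝ) : ℂ)) * a v) s := by
  refine Measure.integrableOn_of_bounded (M := M) hμs ?_ ?_
  · exact ((Complex.measurable_ofReal.comp (measurable_const.mul hΦ)).neg.cexp.mul
      ha).aestronglyMeasurable
  · refine ae_restrict_of_forall_mem hs fun v hv => ?_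
    rw [norm_cexp_neg_ofReal_mul]
    have hexp : Real.exp (-(t ^ 2 * Φ v)) ≤ 1 :=
      Real.exp_le_one_iff.2 (neg_nonpos.2 (mul_nonneg (sq_nonneg t) (hΦ_nonneg v hv)))
    nlinarith [ha_le v hv, norm_nonneg (a v), Real.exp_nonneg (-(t ^ 2 * Φ v))]

theorem norm_setIntegral_cexp_neg_mul_le {b δ : ℝ} (hb : 0 < b) (hM : 0 ≤ M) (ht : 0 < t)
    (hδ : 0 ≤ δ) (hs : MeasurableSet s) (hs_norm : ∀ v ∈ s, δ ≤ ‖v‖)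
    (hΦ : ∀ v ∈ s, b * ‖v‖ ^ 2 ≤ Φ v) (ha : ∀ v ∈ s, ‖a v‖ ≤ M) :
    ‖∫ v in s, Complex.exp (-((t ^ 2 * Φ v : ℝ) : ℂ)) * a v‖
      ≤ M * (π / (b / 2)) ^ (finrank ℝ V / 2 : ℝ) * Real.exp (-(b / 2 * (t * δ) ^ 2))
        / t ^ finrank ℝ V := by
  refine (norm_setIntegral_le_of_norm_le_gaussian (A := M * Real.exp (-(b / 2 * (t * δ) ^ 2)))
    (by positivity) (half_pos hb) ht hs fun v hv => ?_).trans_eq (by ring)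
  have htδ : (t * δ) ^ 2 ≤ (t * ‖v‖) ^ 2 := by gcongr; exact hs_norm v hv
  have hexp : Real.exp (-(t ^ 2 * Φ v))
      ≤ Real.exp (-(b / 2 * (t * δ) ^ 2)) * Real.exp (-(b / 2 * t ^ 2 * ‖v‖ ^ 2)) := by
    rw [← Real.exp_add, Real.exp_le_exp]
    nlinarith [hΦ v hv, sq_nonneg t]
  calc ‖Complex.exp (-((t ^ 2 * Φ v : ℝ) : ℂ)) * a v‖
      = Real.exp (-(t ^ 2 * Φ v)) * ‖a v‖ := norm_cexp_neg_ofReal_mul _ _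
    _ ≤ Real.exp (-(b / 2 * (t * δ) ^ 2)) * Real.exp (-(b / 2 * t ^ 2 * ‖v‖ ^ 2)) * M := by
        gcongr; exact ha v hv
    _ = _ := by ring

theorem le_re_setIntegral_ball_cexp_neg_mul {b₂ k₁ δ : ℝ} (hb₂ : 0 ≤ b₂) (hk₁ : 0 ≤ k₁)
    (ht : 0 < t) (htδ : t⁻¹ ≤ δ)
    (hint : IntegrableOn (fun v => Complex.exp (-((t ^ 2 * Φ v : ℝ) : ℂ)) * a v) (ball 0 δ))
    (hΦ : ∀ v ∈ ball 0 δ, Φ v ≤ b₂ * ‖v‖ ^ 2) (ha : ∀ v ∈ ball 0 δ, k₁ ≤ (a v).re) :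
    k₁ * Real.exp (-b₂) * volume.real (ball (0 : V) 1) / t ^ finrank ℝ V
      ≤ (∫ v in ball 0 δ, Complex.exp (-((t ^ 2 * Φ v : ℝ) : ℂ)) * a v).re := by
  have hvol : volume.real (ball (0 : V) t⁻¹) = volume.real (ball (0 : V) 1) / t ^ finrank ℝ V := by
    rw [measureReal_def, measureReal_def, Measure.addHaar_ball_of_pos _ _ (inv_pos.2 ht),
      ENNReal.toReal_mul, ENNReal.toReal_ofReal (by positivity), inv_pow, inv_mul_eq_div]
  rw [mul_div_assoc, ← hvol]
  refine mul_measureReal_le_re_setIntegral measurableSet_ball measurableSet_ball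
    (ball_subset_ball htδ) measure_ball_lt_top.ne hint (fun v hv => ?_) (fun v hv => ?_)
  · rw [re_cexp_neg_ofReal_mul]
    exact mul_nonneg (Real.exp_nonneg _) (hk₁.trans (ha v hv))
  · have hv' : v ∈ ball (0 : V) δ := ball_subset_ball htδ hv
    rw [mem_ball_zero_iff] at hv
    have htv : t * ‖v‖ < 1 := by simpa [ht.ne'] using mul_lt_mul_of_pos_left hv ht
    have htv2 : t ^ 2 * Φ v ≤ b₂ :=
      calc t ^ 2 * Φ v ≤ t ^ 2 * (b₂ * ‖v‖ ^ 2) := by gcongr; exact hΦ v hv'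
        _ = b₂ * (t * ‖v‖) ^ 2 := by ring
        _ ≤ b₂ * 1 := by gcongr; exact pow_le_one₀ (by positivity) htv.le
        _ = b₂ := mul_one b₂
    rw [re_cexp_neg_ofReal_mul, mul_comm k₁]
    exact mul_le_mul (Real.exp_le_exp.2 (by linarith)) (ha v hv') hk₁ (Real.exp_nonneg _)

theorem le_re_setIntegral_ball_cexp_neg_mul_sub {b₁ b₂ k₁ r δ : ℝ} (hb₁ : 0 < b₁)
    (hb₂ : 0 ≤ b₂) (hk₁ : 0 ≤ k₁) (hM : 0 ≤ M) (ht : 0 < t) (htδ : t⁻¹ ≤ δ) (hδr : δ ≤ r)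
    (hΦ_meas : Measurable Φ) (ha_meas : Measurable a)
    (hΦ_lower : ∀ v ∈ ball 0 r, b₁ * ‖v‖ ^ 2 ≤ Φ v)
    (hΦ_upper : ∀ v ∈ ball 0 r, Φ v ≤ b₂ * ‖v‖ ^ 2)
    (ha : ∀ v ∈ ball 0 r, ‖a v‖ ≤ M) (ha_re : ∀ v ∈ ball 0 δ, k₁ ≤ (a v).re) :
    (k₁ * Real.exp (-b₂) * volume.real (ball (0 : V) 1)
        - M * (π / (b₁ / 2)) ^ (finrank ℝ V / 2 : ℝ) * Real.exp (-(b₁ / 2 * (t * δ) ^ 2)))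
        / t ^ finrank ℝ V
      ≤ (∫ v in ball 0 r, Complex.exp (-((t ^ 2 * Φ v : ℝ) : ℂ)) * a v).re := by
  have hsub : ball (0 : V) δ ⊆ ball 0 r := ball_subset_ball hδr
  have hint := integrableOn_cexp_neg_mul (t := t) hΦ_meas ha_meas measurableSet_ball
    measure_ball_lt_top.ne (fun v hv => (by positivity : 0 ≤ b₁ * ‖v‖ ^ 2).trans (hΦ_lower v hv))
    ha
  have hcore := le_re_setIntegral_ball_cexp_neg_mul hb₂ hk₁ ht htδ (hint.mono_set hsub)
    (fun v hv => hΦ_upper v (hsub hv)) ha_re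
  have htail := norm_setIntegral_cexp_neg_mul_le hb₁ hM ht ((inv_pos.2 ht).le.trans htδ)
    (measurableSet_ball.diff measurableSet_ball)
    (fun v hv => not_lt.1 (mem_ball_zero_iff.not.1 hv.2))
    (fun v hv => hΦ_lower v hv.1) (fun v hv => ha v hv.1)
  have hre := neg_le_of_abs_le (Complex.abs_re_le_norm
    (∫ v in ball 0 r \ ball 0 δ, Complex.exp (-((t ^ 2 * Φ v : ℝ) : ℂ)) * a v))
  rw [setIntegral_sdiff measurableSet_ball hint hsub] at hre htail
  rw [Complex.sub_re] at hre
  rw [sub_div]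
  linarith

end GaussianBounds

theorem steepest_descent_abstract_general (m n k : ℕ)
    (Sig : Set (EuclideanSpace ℝ (Fin k))) (r : ℝ)
    (g : EuclideanSpace ℝ (Fin m) → EuclideanSpace ℝ (Fin k) → ℝ)
    (K : EuclideanSpace ℝ (Fin (2 * n)) → EuclideanSpace ℝ (Fin m) →
      EuclideanSpace ℝ (Fin k) → ℂ)
    (hg_meas : Measurable fun p : EuclideanSpace ℝ (Fin m) × EuclideanSpace ℝ (Fin k) =>
      g p.1 p.2)
    (hK_meas : Measurable fun p : EuclideanSpace ℝ (Fin (2 * n)) ×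
      EuclideanSpace ℝ (Fin m) × EuclideanSpace ℝ (Fin k) => K p.1 p.2.1 p.2.2)
    (F : EuclideanSpace ℝ (Fin (2 * n)) → EuclideanSpace ℝ (Fin k) → ℂ)
    (hF : ∀ x σ, F x σ = ∫ lam in Metric.ball (0 : EuclideanSpace ℝ (Fin m)) r,
      Complex.exp (-((‖x‖ ^ 2 * g lam σ : ℝ) : ℂ)) * K x lam σ)
    (b₁ : ℝ) (hb₁ : 0 < b₁)
    (hg_lower : ∀ lam ∈ Metric.ball (0 : EuclideanSpace ℝ (Fin m)) r, ∀ σ ∈ Sig,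
      b₁ * ‖lam‖ ^ 2 ≤ g lam σ)
    (k₂ : ℝ)
    (hk₂ : ∀ (x : EuclideanSpace ℝ (Fin (2 * n))),
      ∀ lam ∈ Metric.ball (0 : EuclideanSpace ℝ (Fin m)) r, ∀ σ ∈ Sig,
      ‖K x lam σ‖ ≤ k₂) :
    (∃ C₂' : ℝ, 0 < C₂' ∧ ∀ (x : EuclideanSpace ℝ (Fin (2 * n))), x ≠ 0 → ∀ σ ∈ Sig,
      ‖F x σ‖ ≤ C₂' / ‖x‖ ^ m) ∧
    (∀ b₂ : ℝ, 0 < b₂ →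
      (∀ lam ∈ Metric.ball (0 : EuclideanSpace ℝ (Fin m)) r, ∀ σ ∈ Sig,
        g lam σ ≤ b₂ * ‖lam‖ ^ 2) →
      ∀ ε : ℝ → ℝ, (∀ ρ : ℝ, 0 < ρ → ε ρ ∈ Set.Icc 0 r) →
        Tendsto (fun ρ : ℝ => ρ * ε ρ) atTop atTop →
      ∀ k₁ : ℝ, 0 < k₁ →
        (∀ (x : EuclideanSpace ℝ (Fin (2 * n))),
          ∀ lam ∈ Metric.ball (0 : EuclideanSpace ℝ (Fin m)) (ε ‖x‖), ∀ σ ∈ Sig,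
          k₁ ≤ (K x lam σ).re) →
      ∃ C₁' x₀ : ℝ, 0 < C₁' ∧ 0 < x₀ ∧
        ∀ (x : EuclideanSpace ℝ (Fin (2 * n))), x₀ ≤ ‖x‖ → ∀ σ ∈ Sig,
          C₁' / ‖x‖ ^ m ≤ (F x σ).re) := by
  obtain ⟨M, hM, hKM⟩ : ∃ M, 0 ≤ M ∧ ∀ x, ∀ lam ∈ ball (0 : EuclideanSpace ℝ (Fin m)) r,
      ∀ σ ∈ Sig, ‖K x lam σ‖ ≤ M :=
    ⟨max k₂ 0, le_max_right _ _,
      fun x lam hlam σ hσ => (hk₂ x lam hlam σ hσ).trans (le_max_left _ _)⟩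
  set C := M * (π / (b₁ / 2)) ^ ((m : ℝ) / 2)
  refine ⟨⟨C + 1, by positivity, fun x hx σ hσ => ?_⟩, ?_⟩
  · have h := norm_setIntegral_cexp_neg_mul_le hb₁ hM (norm_pos_iff.2 hx)
      le_rfl measurableSet_ball (fun v _ => norm_nonneg v) (hg_lower · · σ hσ) (hKM x · · σ hσ)
    simp only [finrank_euclideanSpace_fin, mul_zero, zero_pow two_ne_zero, neg_zero,
      Real.exp_zero, mul_one] at h
    rw [hF]
    exact h.trans (by gcongr; exact le_add_of_nonneg_right zero_le_one)
  intro b₂ hb₂ hg_upper ε hε hεtend k₁ hk₁ hK₁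
  set c := k₁ * Real.exp (-b₂) * volume.real (ball (0 : EuclideanSpace ℝ (Fin m)) 1)
  have hc : 0 < c := by
    have : 0 < volume.real (ball (0 : EuclideanSpace ℝ (Fin m)) 1) :=
      ENNReal.toReal_pos (measure_ball_pos volume _ one_pos).ne' measure_ball_lt_top.ne
    positivity
  obtain ⟨ρ₀, hρ₀⟩ := eventually_atTop.1 ((hεtend.eventually_ge_atTop 1).and
    (hεtend.eventually_mul_exp_neg_mul_sq_le C (half_pos hb₁) (half_pos hc)))
  refine ⟨c / 2, max ρ₀ 1, half_pos hc, by positivity, fun x hx σ hσ => ?_⟩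
  have ht : 0 < ‖x‖ := one_pos.trans_le ((le_max_right _ _).trans hx)
  obtain ⟨hεx, hsmall⟩ := hρ₀ ‖x‖ ((le_max_left _ _).trans hx)
  have hlower := le_re_setIntegral_ball_cexp_neg_mul_sub (Φ := fun lam => g lam σ)
    (a := fun lam => K x lam σ) hb₁ hb₂.le hk₁.le hM ht
    ((inv_le_iff_one_le_mul₀' ht).2 hεx) (hε ‖x‖ ht).2
    (hg_meas.comp (measurable_id.prodMk measurable_const))
    (hK_meas.comp (measurable_const.prodMk (measurable_id.prodMk measurable_const)))
    (hg_lower · · σ hσ) (hg_upper · · σ hσ) (hKM x · · σ hσ) (hK₁ x · · σ hσ)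
  rw [finrank_euclideanSpace_fin] at hlower
  rw [hF]
  calc c / 2 / ‖x‖ ^ m ≤ (c - C * Real.exp (-(b₁ / 2 * (‖x‖ * ε ‖x‖) ^ 2))) / ‖x‖ ^ m := by
        gcongr; linarith
    _ ≤ _ := hlower

/-- Abstract steepest-descent lemma.  With F(x,σ) = ∫_{B(0,r)} e^{−|x|²g(λ,σ)}K(x,λ,σ)dλ:
if g ≥ b₁|λ|² and |K| ≤ k₂, then |F(x,σ)| ≤ C₂'/|x|^m for x ≠ 0; if moreover
g ≤ b₂|λ|² and Re K ≥ k₁ > 0 on balls B(0,ε(|x|)) with ρ·ε(ρ) → ∞, then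
Re F(x,σ) ≥ C₁'/|x|^m for all |x| ≥ x₀. -/
theorem steepest_descent_abstract (m n k : ℕ) (hm : 1 ≤ m) (hn : 1 ≤ n) (hk : 1 ≤ k)
    (Sig : Set (EuclideanSpace ℝ (Fin k))) (r : ℝ) (hr : 0 < r)
    (g : EuclideanSpace ℝ (Fin m) → EuclideanSpace ℝ (Fin k) → ℝ)
    (K : EuclideanSpace ℝ (Fin (2 * n)) → EuclideanSpace ℝ (Fin m) →
      EuclideanSpace ℝ (Fin k) → ℂ)
    (hg_meas : Measurable fun p : EuclideanSpace ℝ (Fin m) × EuclideanSpace ℝ (Fin k) =>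
      g p.1 p.2)
    (hK_meas : Measurable fun p : EuclideanSpace ℝ (Fin (2 * n)) ×
      EuclideanSpace ℝ (Fin m) × EuclideanSpace ℝ (Fin k) => K p.1 p.2.1 p.2.2)
    (F : EuclideanSpace ℝ (Fin (2 * n)) → EuclideanSpace ℝ (Fin k) → ℂ)
    (hF : ∀ x σ, F x σ = ∫ lam in Metric.ball (0 : EuclideanSpace ℝ (Fin m)) r,
      Complex.exp (-((‖x‖ ^ 2 * g lam σ : ℝ) : ℂ)) * K x lam σ)
    (b₁ : ℝ) (hb₁ : 0 < b₁)
    (hg_lower : ∀ lam ∈ Metric.ball (0 : EuclideanSpace ℝ (Fin m)) r, ∀ σ ∈ Sig,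
      b₁ * ‖lam‖ ^ 2 ≤ g lam σ)
    (k₂ : ℝ)
    (hk₂ : ∀ (x : EuclideanSpace ℝ (Fin (2 * n))),
      ∀ lam ∈ Metric.ball (0 : EuclideanSpace ℝ (Fin m)) r, ∀ σ ∈ Sig,
      ‖K x lam σ‖ ≤ k₂) :
    (∃ C₂' : ℝ, 0 < C₂' ∧ ∀ (x : EuclideanSpace ℝ (Fin (2 * n))), x ≠ 0 → ∀ σ ∈ Sig,
      ‖F x σ‖ ≤ C₂' / ‖x‖ ^ m) ∧
    (∀ b₂ : ℝ, 0 < b₂ →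
      (∀ lam ∈ Metric.ball (0 : EuclideanSpace ℝ (Fin m)) r, ∀ σ ∈ Sig,
        g lam σ ≤ b₂ * ‖lam‖ ^ 2) →
      ∀ ε : ℝ → ℝ, (∀ ρ : ℝ, 0 < ρ → ε ρ ∈ Set.Icc 0 r) →
        Tendsto (fun ρ : ℝ => ρ * ε ρ) atTop atTop →
      ∀ k₁ : ℝ, 0 < k₁ →
        (∀ (x : EuclideanSpace ℝ (Fin (2 * n))),
          ∀ lam ∈ Metric.ball (0 : EuclideanSpace ℝ (Fin m)) (ε ‖x‖), ∀ σ ∈ Sig,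
          k₁ ≤ (K x lam σ).re) →
      ∃ C₁' x₀ : ℝ, 0 < C₁' ∧ 0 < x₀ ∧
        ∀ (x : EuclideanSpace ℝ (Fin (2 * n))), x₀ ≤ ‖x‖ → ∀ σ ∈ Sig,
          C₁' / ‖x‖ ^ m ≤ (F x σ).re) :=
  steepest_descent_abstract_general m n k Sig r g K hg_meas hK_meas F hF b₁ hb₁ hg_lower k₂ hk₂
end
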